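/- arXiv:1001.2163 — 2 statements merged into one kernel-verified Lean document; each statement's English description precedes it below -/
import Mathlib

section
/- Let B be a distribution function of a nonnegative random variable with B(0) < 1, let T > 0, let x : [0,T] → ℝ be bounded Borel, and let f : ℝ × [0,∞) → ℝ be Borel with |f(y,t)| ≤ |y| and |f(y₁,t) − f(y₂,t)| ≤ |y₁ − y₂| for all y, y₁, y₂, t. If x is right-continuous with left-hand limits on [0,T] and, for each y ∈ ℝ, the function t ↦ f(y,t) is right-continuous with left-hand limits, then the unique bounded Borel solution y of y(t) = x(t) + ∫₀ᵗ f(y(t−s), t−s) dB(s), t ∈ [0,T], is right-continuous with left-hand limits. -/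
open MeasureTheory Filter Set Topology

/-- `B` is the distribution function of a nonnegative random variable:
it vanishes on the negatives and tends to `1` at infinity. -/
def IsNNDistFun (B : StieltjesFunction ℝ) : Prop :=
  (∀ x < (0 : ℝ), B x = 0) ∧ Tendsto B atTop (nhds 1)

/-- `y` is a bounded Borel solution on `[0,T]` of the convolution equation
`y(t) = x(t) + ∫₀ᵗ f(y(t-s), t-s) dB(s)`. -/
def SolvesConv (B : StieltjesFunction ℝ) (T : ℝ) (x : ℝ → ℝ) (f : ℝ → ℝ → ℝ)
    (y : ℝ → ℝ) : Prop :=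
  Measurable (fun t : Set.Icc (0 : ℝ) T => y t) ∧
  (∃ C : ℝ, ∀ t ∈ Set.Icc (0 : ℝ) T, |y t| ≤ C) ∧
  ∀ t ∈ Set.Icc (0 : ℝ) T,
    y t = x t + ∫ s in Set.Icc (0 : ℝ) t, f (y (t - s)) (t - s) ∂B.measure

/-- `g` is right-continuous with left-hand limits on `[0,T]`. -/
def RCLLOn (g : ℝ → ℝ) (T : ℝ) : Prop :=
  (∀ t ∈ Set.Ico (0 : ℝ) T, Tendsto g (nhdsWithin t (Set.Ioi t)) (nhds (g t))) ∧
  (∀ t ∈ Set.Ioc (0 : ℝ) T, ∃ L : ℝ, Tendsto g (nhdsWithin t (Set.Iio t)) (nhds L))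

/-- `g` is right-continuous with left-hand limits on `[0,∞)`. -/
def RCLLOnNonneg (g : ℝ → ℝ) : Prop :=
  (∀ t ≥ (0 : ℝ), Tendsto g (nhdsWithin t (Set.Ioi t)) (nhds (g t))) ∧
  (∀ t > (0 : ℝ), ∃ L : ℝ, Tendsto g (nhdsWithin t (Set.Iio t)) (nhds L))

/-! The Picard iterates `y₀ = 0`, `yₙ₊₁ = x + ∫₀ᵗ f(yₙ(t-s), t-s) dB(s)` are right-continuous with
left limits: by dominated convergence the integral operator preserves this regularity, since `f` is
Lipschitz in its first argument and regular in its second. As `dB` is a finite measure with an atom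
`B(0) < 1` at the origin, `∫ e^{-rs} dB(s) → B(0)` when `r → ∞`, so for large `r` the operator is a
contraction for the weighted norm `sup_t e^{-rt} |g t|`. Hence the iterates converge uniformly on
`[0,T]` to the solution, which therefore inherits their regularity. -/

open Function

theorem TendstoUniformlyOnFilter.exists_tendsto {ι α β : Type*} [UniformSpace β] [CompleteSpace β]
    {F : ι → α → β} {f : α → β} {p : Filter ι} {p' : Filter α} [p.NeBot] [p'.NeBot]
    (hF : TendstoUniformlyOnFilter F f p p') (hlim : ∀ i, ∃ L, Tendsto (F i) p' (𝓝 L)) :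
    ∃ ℓ, Tendsto f p' (𝓝 ℓ) := by
  refine cauchy_map_iff_exists_tendsto.1 ⟨inferInstance, fun u hu => ?_⟩
  obtain ⟨t, ht, htu⟩ := comp3_mem_uniformity hu
  obtain ⟨i, hi⟩ := ((hF t ht).curry.and (hF _ (symm_le_uniformity ht)).curry).exists
  obtain ⟨L, hL⟩ := hlim i
  have hcauchy := hL.cauchy_map.2 ht
  rw [prod_map_map_eq, mem_map] at hcauchy ⊢
  filter_upwards [hcauchy, hi.1.prod_mk hi.2] with z hz hfz
  exact htu ⟨F i z.1, hfz.1, F i z.2, hz, hfz.2⟩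

section RCLLOn

variable {g g' : ℝ → ℝ} {T : ℝ}

theorem RCLLOn.congr (hg : RCLLOn g T) (h : EqOn g g' (Icc 0 T)) : RCLLOn g' T := by
  refine ⟨fun t ht => ?_, fun t ht => ?_⟩
  · rw [← h ⟨ht.1, ht.2.le⟩]
    refine (hg.1 t ht).congr' ?_
    filter_upwards [Ioo_mem_nhdsGT ht.2] with v hv using h ⟨ht.1.trans hv.1.le, hv.2.le⟩
  · obtain ⟨L, hL⟩ := hg.2 t ht
    refine ⟨L, hL.congr' ?_⟩
    filter_upwards [Ioo_mem_nhdsLT ht.1] with v hv using h ⟨hv.1.le, hv.2.le.trans ht.2⟩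

theorem RCLLOn.add (hg : RCLLOn g T) (hg' : RCLLOn g' T) : RCLLOn (g + g') T := by
  refine ⟨fun t ht => (hg.1 t ht).add (hg'.1 t ht), fun t ht => ?_⟩
  obtain ⟨L, hL⟩ := hg.2 t ht
  obtain ⟨L', hL'⟩ := hg'.2 t ht
  exact ⟨L + L', hL.add hL'⟩

theorem rcllOn_const (c T : ℝ) : RCLLOn (fun _ => c) T :=
  ⟨fun _ _ => tendsto_const_nhds, fun _ _ => ⟨c, tendsto_const_nhds⟩⟩

theorem RCLLOn.of_tendstoUniformlyOn {F : ℕ → ℝ → ℝ} (hF : ∀ n, RCLLOn (F n) T)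
    (hFg : TendstoUniformlyOn F g atTop (Icc 0 T)) : RCLLOn g T := by
  refine ⟨fun t ht => ?_, fun t ht => ?_⟩
  · have hIcc : Icc 0 T ∈ 𝓝[>] t :=
      mem_of_superset (Ioo_mem_nhdsGT ht.2) fun v hv => ⟨ht.1.trans hv.1.le, hv.2.le⟩
    exact (hFg.tendstoUniformlyOnFilter.mono_right (le_principal_iff.2 hIcc))
      |>.tendsto_of_eventually_tendsto (Eventually.of_forall fun n => (hF n).1 t ht)
        (hFg.tendsto_at ⟨ht.1, ht.2.le⟩)
  · have hIcc : Icc 0 T ∈ 𝓝[<] t :=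
      mem_of_superset (Ioo_mem_nhdsLT ht.1) fun v hv => ⟨hv.1.le, hv.2.le.trans ht.2⟩
    exact (hFg.tendstoUniformlyOnFilter.mono_right (le_principal_iff.2 hIcc)).exists_tendsto
      fun n => (hF n).2 t ht

end RCLLOn

noncomputable def convIntegral (μ : Measure ℝ) (f : ℝ → ℝ → ℝ) (g : ℝ → ℝ) (t : ℝ) : ℝ :=
  ∫ s in Icc 0 t, f (g (t - s)) (t - s) ∂μ

section ConvIntegral

variable {μ : Measure ℝ} {f : ℝ → ℝ → ℝ} {g g' : ℝ → ℝ} {K : ℝ}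

theorem convIntegral_congr {t : ℝ} (h : EqOn g g' (Icc 0 t)) :
    convIntegral μ f g t = convIntegral μ f g' t :=
  setIntegral_congr_fun measurableSet_Icc fun s hs => by
    rw [h ⟨by linarith [hs.2], by linarith [hs.1]⟩]

theorem convIntegral_eq_integral_indicator (g : ℝ → ℝ) (t : ℝ) :
    convIntegral μ f g t = ∫ s, (Icc 0 t).indicator (fun s => f (g (t - s)) (t - s)) s ∂μ :=
  (integral_indicator measurableSet_Icc).symm

theorem measurable_indicator_comp_sub (hfm : Measurable (uncurry f)) (hgm : Measurable g) :
    Measurable fun p : ℝ × ℝ => (Icc 0 p.1).indicator (fun s => f (g (p.1 - s)) (p.1 - s)) p.2 := by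
  have hsub : Measurable fun p : ℝ × ℝ => p.1 - p.2 := measurable_fst.sub measurable_snd
  have hset : MeasurableSet {p : ℝ × ℝ | p.2 ∈ Icc 0 p.1} :=
    (measurableSet_le measurable_const measurable_snd).inter
      (measurableSet_le measurable_snd measurable_fst)
  exact Measurable.ite hset (hfm.comp ((hgm.comp hsub).prodMk hsub)) measurable_const

theorem norm_indicator_comp_sub_le (hf1 : ∀ y t, 0 ≤ t → |f y t| ≤ |y|) (hgK : ∀ u, |g u| ≤ K)
    (t s : ℝ) : ‖(Icc 0 t).indicator (fun s => f (g (t - s)) (t - s)) s‖ ≤ K := by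
  by_cases hs : s ∈ Icc 0 t
  · rw [indicator_of_mem hs, Real.norm_eq_abs]
    exact (hf1 _ _ (by linarith [hs.2])).trans (hgK _)
  · rw [indicator_of_notMem hs, norm_zero]
    exact (abs_nonneg _).trans (hgK 0)

theorem integrableOn_comp_sub [IsFiniteMeasure μ] (hfm : Measurable (uncurry f))
    (hf1 : ∀ y t, 0 ≤ t → |f y t| ≤ |y|) (hgm : Measurable g) (hgK : ∀ u, |g u| ≤ K) (t : ℝ) :
    IntegrableOn (fun s => f (g (t - s)) (t - s)) (Icc 0 t) μ := by
  rw [← integrable_indicator_iff measurableSet_Icc]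
  exact Integrable.of_bound ((measurable_indicator_comp_sub hfm hgm).comp
    measurable_prodMk_left).aestronglyMeasurable K
    (Eventually.of_forall (norm_indicator_comp_sub_le hf1 hgK t))

theorem measurable_convIntegral [SFinite μ] (hfm : Measurable (uncurry f)) (hgm : Measurable g) :
    Measurable (convIntegral μ f g) := by
  simp_rw [funext (convIntegral_eq_integral_indicator (μ := μ) (f := f) g)]
  exact ((measurable_indicator_comp_sub hfm hgm).stronglyMeasurable.integral_prod_right').measurable

theorem abs_convIntegral_le [IsFiniteMeasure μ] (hf1 : ∀ y t, 0 ≤ t → |f y t| ≤ |y|)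
    (hgK : ∀ u, |g u| ≤ K) (t : ℝ) : |convIntegral μ f g t| ≤ K * μ.real univ := by
  rw [convIntegral_eq_integral_indicator, ← Real.norm_eq_abs]
  exact norm_integral_le_of_norm_le_const
    (Eventually.of_forall (norm_indicator_comp_sub_le hf1 hgK t))

theorem tendsto_convIntegral [IsFiniteMeasure μ] {l : Filter ℝ} [l.IsCountablyGenerated]
    (hfm : Measurable (uncurry f)) (hf1 : ∀ y t, 0 ≤ t → |f y t| ≤ |y|) (hgm : Measurable g)
    (hgK : ∀ u, |g u| ≤ K) {G : ℝ → ℝ}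
    (hG : ∀ s, Tendsto (fun v => (Icc 0 v).indicator (fun s => f (g (v - s)) (v - s)) s) l
      (𝓝 (G s))) :
    Tendsto (convIntegral μ f g) l (𝓝 (∫ s, G s ∂μ)) := by
  simp_rw [funext (convIntegral_eq_integral_indicator (μ := μ) (f := f) g)]
  exact tendsto_integral_filter_of_dominated_convergence (fun _ => K)
    (Eventually.of_forall fun v =>
      ((measurable_indicator_comp_sub hfm hgm).comp measurable_prodMk_left).aestronglyMeasurable)
    (Eventually.of_forall fun v => Eventually.of_forall (norm_indicator_comp_sub_le hf1 hgK v))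
    (integrable_const K) (Eventually.of_forall hG)

end ConvIntegral

section Regularity

variable {μ : Measure ℝ} [IsFiniteMeasure μ] {f : ℝ → ℝ → ℝ} {g : ℝ → ℝ} {K T : ℝ}

theorem tendsto_apply_self_of_lipschitz (hf2 : ∀ y₁ y₂ t, 0 ≤ t → |f y₁ t - f y₂ t| ≤ |y₁ - y₂|)
    {l : Filter ℝ} (hl : ∀ᶠ v in l, 0 ≤ v) {a b : ℝ} (hg : Tendsto g l (𝓝 a))
    (hfa : Tendsto (f a) l (𝓝 b)) : Tendsto (fun v => f (g v) v) l (𝓝 b) := by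
  have hdiff : Tendsto (fun v => f (g v) v - f a v) l (𝓝 0) := by
    refine squeeze_zero_norm' ?_ (by simpa using (hg.sub_const a).abs)
    filter_upwards [hl] with v hv using hf2 _ _ _ hv
  simpa using hdiff.add hfa

theorem eventually_mem_Icc_iff_nhdsGT (s t : ℝ) : ∀ᶠ v in 𝓝[>] t, s ∈ Icc 0 v ↔ s ∈ Icc 0 t := by
  rcases lt_or_ge t s with hts | hst
  · filter_upwards [Ioo_mem_nhdsGT hts] with v hv
    simp only [mem_Icc, hv.2.not_ge, hts.not_ge, and_false]
  · filter_upwards [self_mem_nhdsWithin] with v hv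
    simp only [mem_Icc, hst, hst.trans (le_of_lt hv), and_true]

theorem eventually_mem_Icc_iff_nhdsLT (s t : ℝ) : ∀ᶠ v in 𝓝[<] t, s ∈ Icc 0 v ↔ s ∈ Ico 0 t := by
  rcases lt_or_ge s t with hst | hts
  · filter_upwards [Ioo_mem_nhdsLT hst] with v hv
    simp only [mem_Icc, mem_Ico, hv.1.le, hst, and_true]
  · filter_upwards [self_mem_nhdsWithin] with v hv
    simp only [mem_Icc, mem_Ico, (lt_of_lt_of_le hv hts).not_ge, hts.not_gt, and_false]

theorem tendsto_convIntegral_nhdsGT (hfm : Measurable (uncurry f))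
    (hf1 : ∀ y t, 0 ≤ t → |f y t| ≤ |y|) (hf2 : ∀ y₁ y₂ t, 0 ≤ t → |f y₁ t - f y₂ t| ≤ |y₁ - y₂|)
    (hfr : ∀ y, RCLLOnNonneg (fun t => f y t)) (hgm : Measurable g) (hgK : ∀ u, |g u| ≤ K)
    (hg : RCLLOn g T) {t : ℝ} (ht : t ∈ Ico 0 T) :
    Tendsto (convIntegral μ f g) (𝓝[>] t) (𝓝 (convIntegral μ f g t)) := by
  rw [convIntegral_eq_integral_indicator]
  refine tendsto_convIntegral hfm hf1 hgm hgK fun s => ?_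
  have hmem := eventually_mem_Icc_iff_nhdsGT s t
  by_cases hs : s ∈ Icc 0 t
  · have hts : t - s ∈ Ico 0 T := ⟨by linarith [hs.2], by linarith [hs.1, ht.2]⟩
    have hlim := tendsto_apply_self_of_lipschitz hf2
      (eventually_nhdsWithin_of_forall fun v hv => hts.1.trans (le_of_lt hv))
      (hg.1 _ hts) ((hfr _).1 _ hts.1)
    rw [indicator_of_mem hs]
    refine (hlim.comp (map_subRight_nhdsGT (c := s) (a := t)).le).congr' ?_
    filter_upwards [hmem] with v hv using by rw [indicator_of_mem (hv.2 hs)]; rfl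
  · rw [indicator_of_notMem hs]
    refine tendsto_const_nhds.congr' ?_
    filter_upwards [hmem] with v hv using (indicator_of_notMem (fun h => hs (hv.1 h)) _).symm

theorem exists_tendsto_convIntegral_nhdsLT (hfm : Measurable (uncurry f))
    (hf1 : ∀ y t, 0 ≤ t → |f y t| ≤ |y|) (hf2 : ∀ y₁ y₂ t, 0 ≤ t → |f y₁ t - f y₂ t| ≤ |y₁ - y₂|)
    (hfr : ∀ y, RCLLOnNonneg (fun t => f y t)) (hgm : Measurable g) (hgK : ∀ u, |g u| ≤ K)
    (hg : RCLLOn g T) {t : ℝ} (ht : t ∈ Ioc 0 T) :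
    ∃ L, Tendsto (convIntegral μ f g) (𝓝[<] t) (𝓝 L) := by
  have hlim : ∀ s, ∃ M, Tendsto (fun v => (Icc 0 v).indicator (fun s => f (g (v - s)) (v - s)) s)
      (𝓝[<] t) (𝓝 M) := by
    intro s
    have hmem := eventually_mem_Icc_iff_nhdsLT s t
    by_cases hs : s ∈ Ico 0 t
    · have hts : t - s ∈ Ioc 0 T := ⟨by linarith [hs.2], by linarith [hs.1, ht.2]⟩
      obtain ⟨L, hL⟩ := hg.2 _ hts
      obtain ⟨M, hM⟩ := (hfr L).2 _ hts.1
      have hlim := tendsto_apply_self_of_lipschitz hf2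
        (mem_of_superset (Ioo_mem_nhdsLT hts.1) fun v hv => hv.1.le) hL hM
      refine ⟨M, (hlim.comp (map_subRight_nhdsLT (c := s) (a := t)).le).congr' ?_⟩
      filter_upwards [hmem] with v hv using by rw [indicator_of_mem (hv.2 hs)]; rfl
    · refine ⟨0, tendsto_const_nhds.congr' ?_⟩
      filter_upwards [hmem] with v hv using (indicator_of_notMem (fun h => hs (hv.1 h)) _).symm
  choose G hG using hlim
  exact ⟨_, tendsto_convIntegral hfm hf1 hgm hgK hG⟩

theorem RCLLOn.convIntegral (hfm : Measurable (uncurry f))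
    (hf1 : ∀ y t, 0 ≤ t → |f y t| ≤ |y|) (hf2 : ∀ y₁ y₂ t, 0 ≤ t → |f y₁ t - f y₂ t| ≤ |y₁ - y₂|)
    (hfr : ∀ y, RCLLOnNonneg (fun t => f y t)) (hgm : Measurable g) (hgK : ∀ u, |g u| ≤ K)
    (hg : RCLLOn g T) : RCLLOn (convIntegral μ f g) T :=
  ⟨fun _ ht => tendsto_convIntegral_nhdsGT hfm hf1 hf2 hfr hgm hgK hg ht,
    fun _ ht => exists_tendsto_convIntegral_nhdsLT hfm hf1 hf2 hfr hgm hgK hg ht⟩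

end Regularity

section Contraction

variable {μ : Measure ℝ} [IsFiniteMeasure μ] {f : ℝ → ℝ → ℝ} {g g' : ℝ → ℝ} {K K' r : ℝ}

theorem tendsto_setIntegral_exp_neg_mul :
    Tendsto (fun r => ∫ s in Ici 0, Real.exp (-(r * s)) ∂μ) atTop (𝓝 (μ.real {0})) := by
  have hlim : ∀ s ∈ Ici (0 : ℝ),
      Tendsto (fun r => Real.exp (-(r * s))) atTop (𝓝 (({0} : Set ℝ).indicator 1 s)) := by
    intro s hs
    rcases (mem_Ici.1 hs).eq_or_lt with rfl | hs
    · simp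
    · rw [indicator_of_notMem (mem_singleton_iff.not.2 hs.ne')]
      exact Real.tendsto_exp_atBot.comp
        (tendsto_neg_atTop_atBot.comp (tendsto_id.atTop_mul_const hs))
  have hdom := tendsto_integral_filter_of_dominated_convergence (μ := μ.restrict (Ici 0))
    (fun _ => (1 : ℝ)) (Eventually.of_forall fun r => (by fun_prop : Continuous fun s : ℝ =>
      Real.exp (-(r * s))).aestronglyMeasurable)
    ((eventually_ge_atTop 0).mono fun r hr => (ae_restrict_of_forall_mem measurableSet_Ici
      fun s hs => by
        rw [Real.norm_eq_abs, Real.abs_exp, Real.exp_le_one_iff, neg_nonpos]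
        exact mul_nonneg hr hs))
    (integrable_const 1) (ae_restrict_of_forall_mem measurableSet_Ici hlim)
  rwa [setIntegral_indicator (measurableSet_singleton 0), Pi.one_def, setIntegral_const,
    smul_eq_mul, mul_one, inter_eq_right.2 (singleton_subset_iff.2 self_mem_Ici)] at hdom

theorem setIntegral_Icc_exp_neg_mul_le (hr : 0 ≤ r) (t : ℝ) :
    ∫ s in Icc 0 t, Real.exp (-(r * s)) ∂μ ≤ ∫ s in Ici 0, Real.exp (-(r * s)) ∂μ := by
  refine setIntegral_mono_set ?_ (Eventually.of_forall fun s => (Real.exp_pos _).le)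
    Icc_subset_Ici_self.eventuallyLE
  refine Integrable.mono' (integrable_const 1) (by fun_prop : Continuous fun s : ℝ =>
      Real.exp (-(r * s))).aestronglyMeasurable (ae_restrict_of_forall_mem measurableSet_Ici ?_)
  intro s hs
  rw [Real.norm_eq_abs, Real.abs_exp, Real.exp_le_one_iff, neg_nonpos]
  exact mul_nonneg hr hs

theorem abs_convIntegral_sub_le (hfm : Measurable (uncurry f))
    (hf1 : ∀ y t, 0 ≤ t → |f y t| ≤ |y|) (hf2 : ∀ y₁ y₂ t, 0 ≤ t → |f y₁ t - f y₂ t| ≤ |y₁ - y₂|)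
    (hgm : Measurable g) (hgK : ∀ u, |g u| ≤ K) (hg'm : Measurable g') (hg'K : ∀ u, |g' u| ≤ K')
    {c t : ℝ} (h : ∀ u ∈ Icc 0 t, |g u - g' u| ≤ c * Real.exp (r * u)) :
    |convIntegral μ f g t - convIntegral μ f g' t| ≤
      c * Real.exp (r * t) * ∫ s in Icc 0 t, Real.exp (-(r * s)) ∂μ := by
  have hint := integrableOn_comp_sub (μ := μ) hfm hf1 hgm hgK t
  have hint' := integrableOn_comp_sub (μ := μ) hfm hf1 hg'm hg'K t
  rw [convIntegral, convIntegral, ← integral_sub hint hint', ← integral_const_mul]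
  refine (abs_integral_le_integral_abs).trans (setIntegral_mono_on (hint.sub hint').abs
    ((by fun_prop : Continuous fun s : ℝ => c * Real.exp (r * t) * Real.exp (-(r * s)))
      |>.integrableOn_Icc) measurableSet_Icc fun s hs => ?_)
  have hts : t - s ∈ Icc 0 t := ⟨by linarith [hs.2], by linarith [hs.1]⟩
  calc |f (g (t - s)) (t - s) - f (g' (t - s)) (t - s)|
      ≤ c * Real.exp (r * (t - s)) := (hf2 _ _ _ hts.1).trans (h _ hts)
    _ = c * Real.exp (r * t) * Real.exp (-(r * s)) := by
      rw [mul_assoc, ← Real.exp_add]; ring_nf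

end Contraction

noncomputable def picardIter (μ : Measure ℝ) (f : ℝ → ℝ → ℝ) (x : ℝ → ℝ) : ℕ → ℝ → ℝ
  | 0 => 0
  | n + 1 => x + convIntegral μ f (picardIter μ f x n)

theorem measurable_picardIter {μ : Measure ℝ} [SFinite μ] {f : ℝ → ℝ → ℝ} {x : ℝ → ℝ}
    (hfm : Measurable (uncurry f)) (hxm : Measurable x) (n : ℕ) :
    Measurable (picardIter μ f x n) := by
  induction n with
  | zero => exact measurable_const
  | succ n ih => exact hxm.add (measurable_convIntegral hfm ih)

section Picard

variable {μ : Measure ℝ} [IsFiniteMeasure μ] {f : ℝ → ℝ → ℝ} {x y : ℝ → ℝ} {C T : ℝ}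

theorem exists_bound_picardIter (hf1 : ∀ y t, 0 ≤ t → |f y t| ≤ |y|) (hxC : ∀ u, |x u| ≤ C)
    (n : ℕ) : ∃ K, ∀ u, |picardIter μ f x n u| ≤ K := by
  induction n with
  | zero => exact ⟨0, fun u => by simp [picardIter]⟩
  | succ n ih =>
    obtain ⟨K, hK⟩ := ih
    exact ⟨C + K * μ.real univ, fun u =>
      (abs_add_le _ _).trans (add_le_add (hxC u) (abs_convIntegral_le hf1 hK u))⟩

theorem rcllOn_picardIter (hfm : Measurable (uncurry f))
    (hf1 : ∀ y t, 0 ≤ t → |f y t| ≤ |y|) (hf2 : ∀ y₁ y₂ t, 0 ≤ t → |f y₁ t - f y₂ t| ≤ |y₁ - y₂|)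
    (hfr : ∀ y, RCLLOnNonneg (fun t => f y t)) (hxm : Measurable x) (hxC : ∀ u, |x u| ≤ C)
    (hx : RCLLOn x T) (n : ℕ) : RCLLOn (picardIter μ f x n) T := by
  induction n with
  | zero => exact rcllOn_const 0 T
  | succ n ih =>
    obtain ⟨K, hK⟩ := exists_bound_picardIter (μ := μ) hf1 hxC n
    exact hx.add (ih.convIntegral hfm hf1 hf2 hfr (measurable_picardIter hfm hxm n) hK)

theorem abs_picardIter_sub_le (hfm : Measurable (uncurry f))
    (hf1 : ∀ y t, 0 ≤ t → |f y t| ≤ |y|) (hf2 : ∀ y₁ y₂ t, 0 ≤ t → |f y₁ t - f y₂ t| ≤ |y₁ - y₂|)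
    {Cx : ℝ} (hxm : Measurable x) (hxC : ∀ u, |x u| ≤ Cx) (hym : Measurable y)
    (hyC : ∀ u, |y u| ≤ C)
    (hy : ∀ t ∈ Icc 0 T, y t = x t + convIntegral μ f y t) {r : ℝ} (hr : 0 ≤ r) (n : ℕ) :
    ∀ t ∈ Icc 0 T, |picardIter μ f x n t - y t| ≤
      C * (∫ s in Ici 0, Real.exp (-(r * s)) ∂μ) ^ n * Real.exp (r * t) := by
  set q := ∫ s in Ici 0, Real.exp (-(r * s)) ∂μ
  have hC : 0 ≤ C := (abs_nonneg _).trans (hyC 0)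
  have hq : 0 ≤ q := setIntegral_nonneg measurableSet_Ici fun s _ => (Real.exp_pos _).le
  induction n with
  | zero =>
    intro t ht
    have : 1 ≤ Real.exp (r * t) := Real.one_le_exp (mul_nonneg hr ht.1)
    simpa [picardIter] using (hyC t).trans (le_mul_of_one_le_right hC this)
  | succ n ih =>
    intro t ht
    obtain ⟨K, hK⟩ := exists_bound_picardIter (μ := μ) hf1 hxC n
    have hdiff : picardIter μ f x (n + 1) t - y t =
        convIntegral μ f (picardIter μ f x n) t - convIntegral μ f y t := by
      rw [hy t ht, picardIter, Pi.add_apply]; ring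
    rw [hdiff]
    calc _ ≤ C * q ^ n * Real.exp (r * t) * ∫ s in Icc 0 t, Real.exp (-(r * s)) ∂μ :=
          abs_convIntegral_sub_le hfm hf1 hf2 (measurable_picardIter hfm hxm n) hK hym hyC
            fun u hu => ih u ⟨hu.1, hu.2.trans ht.2⟩
      _ ≤ C * q ^ n * Real.exp (r * t) * q :=
          mul_le_mul_of_nonneg_left (setIntegral_Icc_exp_neg_mul_le hr t) (by positivity)
      _ = C * q ^ (n + 1) * Real.exp (r * t) := by ring

theorem tendstoUniformlyOn_picardIter (hμ : μ.real {0} < 1) (hfm : Measurable (uncurry f))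
    (hf1 : ∀ y t, 0 ≤ t → |f y t| ≤ |y|) (hf2 : ∀ y₁ y₂ t, 0 ≤ t → |f y₁ t - f y₂ t| ≤ |y₁ - y₂|)
    {Cx : ℝ} (hxm : Measurable x) (hxC : ∀ u, |x u| ≤ Cx) (hym : Measurable y)
    (hyC : ∀ u, |y u| ≤ C)
    (hy : ∀ t ∈ Icc 0 T, y t = x t + convIntegral μ f y t) :
    TendstoUniformlyOn (picardIter μ f x) y atTop (Icc 0 T) := by
  obtain ⟨r, hq, hr⟩ := ((tendsto_setIntegral_exp_neg_mul (μ := μ)).eventually_lt_const hμ |>.and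
    (eventually_ge_atTop 0)).exists
  set q := ∫ s in Ici 0, Real.exp (-(r * s)) ∂μ
  have hq0 : 0 ≤ q := setIntegral_nonneg measurableSet_Ici fun s _ => (Real.exp_pos _).le
  have hC : 0 ≤ C := (abs_nonneg _).trans (hyC 0)
  have hlim : Tendsto (fun n => C * q ^ n * Real.exp (r * T)) atTop (𝓝 0) := by
    simpa using ((tendsto_pow_atTop_nhds_zero_of_lt_one hq0 hq).const_mul C).mul_const
      (Real.exp (r * T))
  rw [Metric.tendstoUniformlyOn_iff]
  intro ε hε
  filter_upwards [hlim.eventually_lt_const hε] with n hn t ht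
  rw [dist_comm, Real.dist_eq]
  calc _ ≤ C * q ^ n * Real.exp (r * t) :=
        abs_picardIter_sub_le hfm hf1 hf2 hxm hxC hym hyC hy hr n t ht
    _ ≤ C * q ^ n * Real.exp (r * T) := by gcongr; exact ht.2
    _ < ε := hn

end Picard

theorem IsNNDistFun.isFiniteMeasure {B : StieltjesFunction ℝ} (hB : IsNNDistFun B) :
    IsFiniteMeasure B.measure :=
  B.isFiniteMeasure (tendsto_const_nhds.congr' <|
    (eventually_lt_atBot 0).mono fun _ hu => (hB.1 _ hu).symm) hB.2

theorem IsNNDistFun.measureReal_singleton_zero {B : StieltjesFunction ℝ} (hB : IsNNDistFun B) :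
    B.measure.real {0} = B 0 := by
  have hleft : leftLim B 0 = 0 := leftLim_eq_of_tendsto <| tendsto_const_nhds.congr' <|
    eventually_nhdsWithin_of_forall fun _ hu => (hB.1 _ hu).symm
  have hB0 : 0 ≤ B 0 := (hB.1 (-1) (by norm_num)).symm.trans_le (B.mono (by norm_num))
  rw [measureReal_def, B.measure_singleton, hleft, sub_zero, ENNReal.toReal_ofReal hB0]

theorem exists_measurable_bounded_extension {T : ℝ} (hT : 0 ≤ T) {x : ℝ → ℝ}
    (hxm : Measurable fun t : Icc 0 T => x t) (hxb : ∃ C, ∀ t ∈ Icc 0 T, |x t| ≤ C) :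
    ∃ X : ℝ → ℝ, Measurable X ∧ (∃ C, ∀ u, |X u| ≤ C) ∧ EqOn X x (Icc 0 T) := by
  obtain ⟨C, hC⟩ := hxb
  exact ⟨IccExtend hT (fun t : Icc 0 T => x t), hxm.comp continuous_projIcc.measurable,
    ⟨C, fun u => hC _ (projIcc 0 T hT u).2⟩, fun _ ht => IccExtend_of_mem _ _ ht⟩

/-- If `x` is right-continuous with left-hand limits and `f(y, ·)` is right-continuous with
left-hand limits for every `y`, then the unique bounded Borel solution of the convolution
equation is right-continuous with left-hand limits (Lemma B.1, regularity part). -/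
theorem convolutionEquation_solution_rcll
    (B : StieltjesFunction ℝ) (hB : IsNNDistFun B) (hB0 : B 0 < 1)
    (T : ℝ) (hT : 0 < T)
    (x : ℝ → ℝ) (hxm : Measurable (fun t : Set.Icc (0 : ℝ) T => x t))
    (hxb : ∃ C : ℝ, ∀ t ∈ Set.Icc (0 : ℝ) T, |x t| ≤ C)
    (hxr : RCLLOn x T)
    (f : ℝ → ℝ → ℝ) (hfm : Measurable (Function.uncurry f))
    (hf1 : ∀ (y t : ℝ), 0 ≤ t → |f y t| ≤ |y|)
    (hf2 : ∀ (y₁ y₂ t : ℝ), 0 ≤ t → |f y₁ t - f y₂ t| ≤ |y₁ - y₂|)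
    (hfr : ∀ y : ℝ, RCLLOnNonneg (fun t => f y t))
    (y : ℝ → ℝ) (hy : SolvesConv B T x f y) :
    RCLLOn y T := by
  have := hB.isFiniteMeasure
  obtain ⟨X, hXm, ⟨Cx, hXC⟩, hXx⟩ := exists_measurable_bounded_extension hT.le hxm hxb
  obtain ⟨Y, hYm, ⟨Cy, hYC⟩, hYy⟩ := exists_measurable_bounded_extension hT.le hy.1 hy.2.1
  have hY : ∀ t ∈ Icc 0 T, Y t = X t + convIntegral B.measure f Y t := fun t ht => by
    rw [hYy ht, hXx ht, hy.2.2 t ht, convIntegral_congr fun u hu => hYy ⟨hu.1, hu.2.trans ht.2⟩]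
    rfl
  have hconv := tendstoUniformlyOn_picardIter (hB.measureReal_singleton_zero ▸ hB0)
    hfm hf1 hf2 hXm hXC hYm hYC hY
  exact .of_tendstoUniformlyOn (rcllOn_picardIter hfm hf1 hf2 hfr hXm hXC (hxr.congr hXx.symm))
    (hconv.congr_right hYy)
end

section
/- Let B be a distribution function of a nonnegative random variable with B(0) < 1, let T > 0, and let f and fⁿ (n ≥ 1) be Borel functions from ℝ × [0,∞) to ℝ, each satisfying |g(y,t)| ≤ |y| and |g(y₁,t) − g(y₂,t)| ≤ |y₁ − y₂|. Suppose fⁿ(y,t) → f(y,t) as n → ∞ for every y and t, f^m(y,t) ≤ fⁿ(y,t) whenever m ≥ n, and fⁿ(y₁,t) ≤ fⁿ(y₂,t) whenever y₁ ≤ y₂. Let x and xⁿ be bounded Borel functions on [0,T] with xⁿ(t) → x(t) for every t ∈ [0,T] and sup_n sup_{t∈[0,T]} |xⁿ(t)| < ∞, and let y and yⁿ be the unique bounded Borel solutions of y(t) = x(t) + ∫₀ᵗ f(y(t−s), t−s) dB(s) and yⁿ(t) = xⁿ(t) + ∫₀ᵗ fⁿ(yⁿ(t−s), t−s) dB(s).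 Then yⁿ(t) → y(t) as n → ∞ for every t ∈ [0,T]. -/
/-!
Write `convIcc μ g t = ∫_{[0,t]} g (t - s) dμ(s)` with `μ = dB`. Since `μ {0} = B 0 < 1`, dominated
convergence gives `r` with `∫_{[0,T]} e^{-rs} dμ(s) < 1`. In the weighted norm
`sup_{[0,T]} e^{-rt} |u t|` the operator `u ↦ convIcc μ u` is then a contraction, so
`0 ≤ u ≤ a + convIcc μ u` on `[0,T]` forces `u ≤ C a` with `C` depending only on `μ` and `T`;
in particular the `yⁿ` are uniformly bounded.
By the Lipschitz bound, `dₙ = |yⁿ - y|` satisfies `dₙ ≤ eₙ + convIcc μ dₙ`, where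
`eₙ t = |xⁿ t - x t| + ∫_{[0,t]} |fⁿ (y (t - s)) (t - s) - f (y (t - s)) (t - s)| dμ(s)`
tends to `0` by dominated convergence. Passing to the limit along the tail suprema of `dₙ`, again
by dominated convergence, `D = limsup dₙ` satisfies `D ≤ convIcc μ D`, hence `D = 0`.
-/

open MeasureTheory Filter Set Topology

/-- `g` is a Borel function on `ℝ × [0,∞)` satisfying `|g(y,t)| ≤ |y|` and the Lipschitz
condition `|g(y₁,t) − g(y₂,t)| ≤ |y₁ − y₂|`. -/
def GoodKernel (g : ℝ → ℝ → ℝ) : Prop :=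
  Measurable (Function.uncurry g) ∧
  (∀ (y t : ℝ), 0 ≤ t → |g y t| ≤ |y|) ∧
  (∀ (y₁ y₂ t : ℝ), 0 ≤ t → |g y₁ t - g y₂ t| ≤ |y₁ - y₂|)

noncomputable def convIcc (μ : Measure ℝ) (g : ℝ → ℝ) (t : ℝ) : ℝ :=
  ∫ s in Icc 0 t, g (t - s) ∂μ

def BddMeasurable (T : ℝ) (g : ℝ → ℝ) : Prop :=
  Measurable g ∧ ∃ C, ∀ τ ∈ Icc 0 T, |g τ| ≤ C

lemma sub_mem_Icc_zero {s t T : ℝ} (ht : t ≤ T) (hs : s ∈ Icc 0 t) : t - s ∈ Icc 0 T :=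
  ⟨by linarith [hs.2], by linarith [hs.1]⟩

namespace BddMeasurable

variable {T : ℝ} {g h : ℝ → ℝ}

lemma of_nonneg_of_le (hg : Measurable g) {M : ℝ} (h0 : ∀ τ ∈ Icc 0 T, 0 ≤ g τ)
    (hM : ∀ τ ∈ Icc 0 T, g τ ≤ M) : BddMeasurable T g :=
  ⟨hg, M, fun τ hτ => (abs_of_nonneg (h0 τ hτ)).trans_le (hM τ hτ)⟩

lemma add (hg : BddMeasurable T g) (hh : BddMeasurable T h) :
    BddMeasurable T fun τ => g τ + h τ := by
  obtain ⟨hgm, C, hC⟩ := hg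
  obtain ⟨hhm, D, hD⟩ := hh
  exact ⟨hgm.add hhm, C + D, fun τ hτ =>
    (abs_add_le _ _).trans (add_le_add (hC τ hτ) (hD τ hτ))⟩

lemma sub (hg : BddMeasurable T g) (hh : BddMeasurable T h) :
    BddMeasurable T fun τ => g τ - h τ := by
  obtain ⟨hgm, C, hC⟩ := hg
  obtain ⟨hhm, D, hD⟩ := hh
  exact ⟨hgm.sub hhm, C + D, fun τ hτ =>
    (abs_sub _ _).trans (add_le_add (hC τ hτ) (hD τ hτ))⟩

lemma abs (hg : BddMeasurable T g) : BddMeasurable T fun τ => |g τ| := by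
  obtain ⟨hgm, C, hC⟩ := hg
  exact ⟨hgm.abs, C, fun τ hτ => (abs_abs (g τ)).trans_le (hC τ hτ)⟩

end BddMeasurable

lemma abs_convIcc_le (μ : Measure ℝ) (g : ℝ → ℝ) (t : ℝ) :
    |convIcc μ g t| ≤ convIcc μ (fun τ => |g τ|) t := by
  unfold convIcc
  simpa only [Real.norm_eq_abs] using norm_integral_le_integral_norm (μ := μ.restrict (Icc 0 t))
    fun s => g (t - s)

section convIcc

variable {μ : Measure ℝ} [IsLocallyFiniteMeasure μ] {T t : ℝ} {g h : ℝ → ℝ}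

lemma BddMeasurable.integrableOn_comp_sub (hg : BddMeasurable T g) (ht : t ≤ T) :
    IntegrableOn (fun s => g (t - s)) (Icc 0 t) μ := by
  obtain ⟨hgm, C, hC⟩ := hg
  exact Measure.integrableOn_of_bounded measure_Icc_lt_top.ne
    (hgm.comp (measurable_const.sub measurable_id)).aestronglyMeasurable
    ((ae_restrict_iff' measurableSet_Icc).2
      (ae_of_all _ fun _ hs => hC _ (sub_mem_Icc_zero ht hs)))

lemma convIcc_mono (hg : BddMeasurable T g) (hh : BddMeasurable T h)
    (hle : ∀ τ ∈ Icc 0 T, g τ ≤ h τ) (ht : t ≤ T) : convIcc μ g t ≤ convIcc μ h t :=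
  setIntegral_mono_on (hg.integrableOn_comp_sub ht) (hh.integrableOn_comp_sub ht)
    measurableSet_Icc fun _ hs => hle _ (sub_mem_Icc_zero ht hs)

lemma convIcc_add (hg : BddMeasurable T g) (hh : BddMeasurable T h) (ht : t ≤ T) :
    convIcc μ (fun τ => g τ + h τ) t = convIcc μ g t + convIcc μ h t :=
  integral_add (hg.integrableOn_comp_sub ht) (hh.integrableOn_comp_sub ht)

lemma convIcc_sub (hg : BddMeasurable T g) (hh : BddMeasurable T h) (ht : t ≤ T) :
    convIcc μ (fun τ => g τ - h τ) t = convIcc μ g t - convIcc μ h t :=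
  integral_sub (hg.integrableOn_comp_sub ht) (hh.integrableOn_comp_sub ht)

lemma tendsto_convIcc {G : ℕ → ℝ → ℝ} {C : ℝ} (hG : ∀ n, Measurable (G n))
    (hGC : ∀ n, ∀ τ ∈ Icc 0 T, |G n τ| ≤ C)
    (hlim : ∀ τ ∈ Icc 0 T, Tendsto (fun n => G n τ) atTop (𝓝 (g τ))) (ht : t ≤ T) :
    Tendsto (fun n => convIcc μ (G n) t) atTop (𝓝 (convIcc μ g t)) :=
  tendsto_integral_of_dominated_convergence (fun _ => C)
    (fun n => ((hG n).comp (measurable_const.sub measurable_id)).aestronglyMeasurable)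
    (integrableOn_const measure_Icc_lt_top.ne)
    (fun n => (ae_restrict_iff' measurableSet_Icc).2
      (ae_of_all _ fun _ hs => hGC n _ (sub_mem_Icc_zero ht hs)))
    ((ae_restrict_iff' measurableSet_Icc).2
      (ae_of_all _ fun _ hs => hlim _ (sub_mem_Icc_zero ht hs)))

lemma le_convIcc_of_tendsto {E : ℕ → ℝ → ℝ} {C : ℝ} (hE : ∀ N, Measurable (E N))
    (hEC : ∀ N, ∀ τ ∈ Icc 0 T, |E N τ| ≤ C)
    (hlim : ∀ τ ∈ Icc 0 T, Tendsto (fun N => E N τ) atTop (𝓝 (g τ))) (ht : t ∈ Icc 0 T)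
    (hle : ∀ ε > 0, ∀ᶠ N in atTop, E N t ≤ ε + convIcc μ (E N) t) :
    g t ≤ convIcc μ g t :=
  le_of_forall_pos_le_add fun ε hε => by
    rw [add_comm]
    exact le_of_tendsto_of_tendsto (hlim t ht)
      ((tendsto_convIcc hE hEC hlim ht.2).const_add ε) (hle ε hε)

end convIcc

section renewal

variable {μ : Measure ℝ} [IsLocallyFiniteMeasure μ] {T : ℝ}

lemma exists_setIntegral_exp_neg_mul_lt_one (hμ : μ {0} < 1) (T : ℝ) :
    ∃ r : ℝ, 0 ≤ r ∧ ∫ s in Icc 0 T, Real.exp (-(r * s)) ∂μ < 1 := by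
  have hlim : Tendsto (fun n : ℕ => ∫ s in Icc 0 T, Real.exp (-(n * s)) ∂μ) atTop
      (𝓝 (∫ s in Icc 0 T, ({0} : Set ℝ).indicator (1 : ℝ → ℝ) s ∂μ)) := by
    refine tendsto_integral_of_dominated_convergence (fun _ => 1) (fun n => by fun_prop)
      (integrableOn_const measure_Icc_lt_top.ne) (fun n => ?_) ?_
    · refine (ae_restrict_iff' measurableSet_Icc).2 (ae_of_all _ fun s hs => ?_)
      rw [Real.norm_of_nonneg (Real.exp_pos _).le, Real.exp_le_one_iff, neg_nonpos]
      exact mul_nonneg n.cast_nonneg hs.1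
    · refine (ae_restrict_iff' measurableSet_Icc).2 (ae_of_all _ fun s hs => ?_)
      rcases hs.1.eq_or_lt with rfl | hs0
      · simp
      · rw [indicator_of_notMem (mem_singleton_iff.not.2 hs0.ne')]
        exact Real.tendsto_exp_neg_atTop_nhds_zero.comp
          (tendsto_natCast_atTop_atTop.atTop_mul_const hs0)
  have hatom : ∫ s in Icc 0 T, ({0} : Set ℝ).indicator (1 : ℝ → ℝ) s ∂μ < 1 := by
    rw [integral_indicator_one (μ := μ.restrict (Icc 0 T)) (measurableSet_singleton 0),
      measureReal_def]
    exact ENNReal.toReal_lt_of_lt_ofReal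
      ((Measure.restrict_apply_le _ _).trans_lt (ENNReal.ofReal_one.symm ▸ hμ))
  obtain ⟨n, hn⟩ := (hlim.eventually (gt_mem_nhds hatom)).exists
  exact ⟨n, n.cast_nonneg, hn⟩

lemma exp_neg_mul_convIcc_le {r S t : ℝ} {u : ℝ → ℝ} (hu : BddMeasurable T u)
    (huS : ∀ τ ∈ Icc 0 T, Real.exp (-(r * τ)) * u τ ≤ S) (hS : 0 ≤ S) (ht : t ≤ T) :
    Real.exp (-(r * t)) * convIcc μ u t ≤ (∫ s in Icc 0 T, Real.exp (-(r * s)) ∂μ) * S := by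
  have hint : IntegrableOn (fun s => Real.exp (-(r * s))) (Icc 0 T) μ :=
    (by fun_prop : Continuous fun s => Real.exp (-(r * s))).integrableOn_Icc
  calc Real.exp (-(r * t)) * convIcc μ u t
      = ∫ s in Icc 0 t, Real.exp (-(r * t)) * u (t - s) ∂μ := (integral_const_mul _ _).symm
    _ ≤ ∫ s in Icc 0 t, Real.exp (-(r * s)) * S ∂μ := by
        refine setIntegral_mono_on ((hu.integrableOn_comp_sub ht).const_mul _)
          ((hint.mono_set (Icc_subset_Icc_right ht)).mul_const _) measurableSet_Icc fun s hs => ?_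
        calc Real.exp (-(r * t)) * u (t - s)
            = Real.exp (-(r * s)) * (Real.exp (-(r * (t - s))) * u (t - s)) := by
              rw [← mul_assoc, ← Real.exp_add]; ring_nf
          _ ≤ Real.exp (-(r * s)) * S :=
              mul_le_mul_of_nonneg_left (huS _ (sub_mem_Icc_zero ht hs)) (Real.exp_pos _).le
    _ = (∫ s in Icc 0 t, Real.exp (-(r * s)) ∂μ) * S := integral_mul_const _ _
    _ ≤ (∫ s in Icc 0 T, Real.exp (-(r * s)) ∂μ) * S :=
        mul_le_mul_of_nonneg_right (setIntegral_mono_set hint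
          (ae_of_all _ fun s => (Real.exp_pos _).le) (Icc_subset_Icc_right ht).eventuallyLE) hS

lemma le_mul_of_le_add_convIcc {r q a M : ℝ} {u : ℝ → ℝ} (hr : 0 ≤ r)
    (hq : ∫ s in Icc 0 T, Real.exp (-(r * s)) ∂μ ≤ q) (hq1 : q < 1) (ha : 0 ≤ a)
    (hu : Measurable u) (hu0 : ∀ t ∈ Icc 0 T, 0 ≤ u t) (huM : ∀ t ∈ Icc 0 T, u t ≤ M)
    (H : ∀ t ∈ Icc 0 T, u t ≤ a + convIcc μ u t) :
    ∀ t ∈ Icc 0 T, u t ≤ Real.exp (r * T) / (1 - q) * a := by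
  intro t ht
  have hw : ∀ τ, 0 ≤ τ → Real.exp (-(r * τ)) ≤ 1 := fun τ hτ => by
    rw [Real.exp_le_one_iff, neg_nonpos]; exact mul_nonneg hr hτ
  set v : ℝ → ℝ := fun τ => Real.exp (-(r * τ)) * u τ
  have hbdd : BddAbove (v '' Icc 0 T) := ⟨M, by
    rintro _ ⟨τ, hτ, rfl⟩; exact (mul_le_of_le_one_left (hu0 τ hτ) (hw τ hτ.1)).trans (huM τ hτ)⟩
  set S := sSup (v '' Icc 0 T)
  have hvS : ∀ τ ∈ Icc 0 T, v τ ≤ S := fun τ hτ => le_csSup hbdd (mem_image_of_mem v hτ)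
  have hS0 : 0 ≤ S := (mul_nonneg (Real.exp_pos _).le (hu0 t ht)).trans (hvS t ht)
  have hSq : S ≤ a + q * S := csSup_le ⟨v t, mem_image_of_mem v ht⟩ <| by
    rintro _ ⟨τ, hτ, rfl⟩
    calc v τ ≤ Real.exp (-(r * τ)) * a + Real.exp (-(r * τ)) * convIcc μ u τ := by
          rw [← mul_add]; exact mul_le_mul_of_nonneg_left (H τ hτ) (Real.exp_pos _).le
      _ ≤ a + q * S := add_le_add (mul_le_of_le_one_left ha (hw τ hτ.1))
          ((exp_neg_mul_convIcc_le (.of_nonneg_of_le hu hu0 huM) hvS hS0 hτ.2).trans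
            (mul_le_mul_of_nonneg_right hq hS0))
  calc u t = Real.exp (r * t) * v t := by
        simp only [v, ← mul_assoc, ← Real.exp_add, add_neg_cancel, Real.exp_zero, one_mul]
    _ ≤ Real.exp (r * T) * (a / (1 - q)) := by
        refine mul_le_mul (Real.exp_le_exp.2 (mul_le_mul_of_nonneg_left ht.2 hr)) ?_
          (mul_nonneg (Real.exp_pos _).le (hu0 t ht)) (Real.exp_pos _).le
        rw [le_div_iff₀ (sub_pos.2 hq1)]
        nlinarith [hvS t ht]
    _ = Real.exp (r * T) / (1 - q) * a := by ring

theorem exists_le_mul_of_le_add_convIcc (hμ : μ {0} < 1) (T : ℝ) :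
    ∃ C : ℝ, ∀ (a M : ℝ) (u : ℝ → ℝ), 0 ≤ a → Measurable u → (∀ t ∈ Icc 0 T, 0 ≤ u t) →
      (∀ t ∈ Icc 0 T, u t ≤ M) → (∀ t ∈ Icc 0 T, u t ≤ a + convIcc μ u t) →
      ∀ t ∈ Icc 0 T, u t ≤ C * a := by
  obtain ⟨r, hr, hr1⟩ := exists_setIntegral_exp_neg_mul_lt_one hμ T
  exact ⟨_, fun a M u ha hu hu0 huM H => le_mul_of_le_add_convIcc hr le_rfl hr1 ha hu hu0 huM H⟩

theorem tendsto_zero_of_le_add_convIcc (hμ : μ {0} < 1) {d e : ℕ → ℝ → ℝ} {M : ℝ}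
    (hd : ∀ n, Measurable (d n)) (hd0 : ∀ n, ∀ t ∈ Icc 0 T, 0 ≤ d n t)
    (hdM : ∀ n, ∀ t ∈ Icc 0 T, d n t ≤ M)
    (he : ∀ t ∈ Icc 0 T, Tendsto (fun n => e n t) atTop (𝓝 0))
    (hde : ∀ n, ∀ t ∈ Icc 0 T, d n t ≤ e n t + convIcc μ (d n) t) :
    ∀ t ∈ Icc 0 T, Tendsto (fun n => d n t) atTop (𝓝 0) := by
  obtain ⟨C, hC⟩ := exists_le_mul_of_le_add_convIcc hμ T
  -- `D = limsup d` as the decreasing limit of the tail suprema `E N`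
  set E : ℕ → ℝ → ℝ := fun N τ => ⨆ m, d (N + m) τ
  set D : ℝ → ℝ := fun τ => ⨅ N, E N τ
  have hdE : ∀ N m, ∀ τ ∈ Icc 0 T, d (N + m) τ ≤ E N τ := fun N m τ hτ =>
    le_ciSup (f := fun k => d (N + k) τ) ⟨M, by rintro _ ⟨k, rfl⟩; exact hdM _ τ hτ⟩ m
  have hEM : ∀ N, ∀ τ ∈ Icc 0 T, E N τ ≤ M := fun N τ hτ => ciSup_le fun m => hdM _ τ hτ
  have hE0 : ∀ N, ∀ τ ∈ Icc 0 T, 0 ≤ E N τ := fun N τ hτ =>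
    (hd0 _ τ hτ).trans (hdE N 0 τ hτ)
  have hEm : ∀ N, Measurable (E N) := fun N => Measurable.iSup fun m => hd (N + m)
  have hEanti : ∀ τ ∈ Icc 0 T, Antitone fun N => E N τ := fun τ hτ =>
    antitone_nat_of_succ_le fun N => ciSup_le fun m => by
      simpa only [Nat.add_right_comm N 1 m, add_assoc] using hdE N (m + 1) τ hτ
  have hED : ∀ τ ∈ Icc 0 T, Tendsto (fun N => E N τ) atTop (𝓝 (D τ)) := fun τ hτ =>
    tendsto_atTop_ciInf (hEanti τ hτ) ⟨0, by rintro _ ⟨N, rfl⟩; exact hE0 N τ hτ⟩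
  have hDconv : ∀ τ ∈ Icc 0 T, D τ ≤ 0 + convIcc μ D τ := fun τ hτ => by
    rw [zero_add]
    refine le_convIcc_of_tendsto hEm
      (fun N σ hσ => (abs_of_nonneg (hE0 N σ hσ)).trans_le (hEM N σ hσ)) hED hτ fun ε hε => ?_
    obtain ⟨N₀, hN₀⟩ := eventually_atTop.1 ((he τ hτ).eventually (eventually_le_nhds hε))
    exact eventually_atTop.2 ⟨N₀, fun N hN => ciSup_le fun m =>
      (hde _ τ hτ).trans <| add_le_add (hN₀ _ (by omega)) <|
        convIcc_mono (BddMeasurable.of_nonneg_of_le (hd _) (hd0 _) (hdM _))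
          (BddMeasurable.of_nonneg_of_le (hEm N) (hE0 N) (hEM N)) (hdE N m) hτ.2⟩
  intro t ht
  have hD0 : ∀ τ ∈ Icc 0 T, 0 ≤ D τ := fun τ hτ => ge_of_tendsto' (hED τ hτ) fun N => hE0 N τ hτ
  have hDt : D t = 0 := le_antisymm (by
    simpa using hC 0 M D le_rfl (Measurable.iInf hEm) hD0
      (fun τ hτ => le_of_tendsto' (hED τ hτ) fun N => hEM N τ hτ) hDconv t ht) (hD0 t ht)
  exact tendsto_of_tendsto_of_tendsto_of_le_of_le tendsto_const_nhds (hDt ▸ hED t ht)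
    (fun n => hd0 n t ht) fun n => hdE n 0 t ht

end renewal

def IsBorelSolution (μ : Measure ℝ) (T : ℝ) (x : ℝ → ℝ) (g : ℝ → ℝ → ℝ) (Y : ℝ → ℝ) : Prop :=
  BddMeasurable T Y ∧ ∀ t ∈ Icc 0 T, Y t = x t + convIcc μ (fun τ => g (Y τ) τ) t

lemma IsNNDistFun.measure_singleton_zero_lt_one {B : StieltjesFunction ℝ} (hB : IsNNDistFun B)
    (hB0 : B 0 < 1) : B.measure {0} < 1 := by
  have hleft : 0 ≤ Function.leftLim B 0 := by
    have := B.mono.le_leftLim (show (-1 : ℝ) < 0 by norm_num)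
    rwa [hB.1 (-1) (by norm_num)] at this
  rw [B.measure_singleton]
  exact ENNReal.ofReal_lt_one.2 (by linarith)

lemma SolvesConv.exists_isBorelSolution {B : StieltjesFunction ℝ} {T : ℝ} {x y : ℝ → ℝ}
    {f : ℝ → ℝ → ℝ} (hT : 0 ≤ T) (hy : SolvesConv B T x f y) :
    ∃ Y, IsBorelSolution B.measure T x f Y ∧ EqOn Y y (Icc 0 T) := by
  obtain ⟨hym, ⟨C, hC⟩, heq⟩ := hy
  set Y := IccExtend hT fun t : Icc (0 : ℝ) T => y t
  have hYy : EqOn Y y (Icc 0 T) := fun t ht => IccExtend_of_mem _ _ ht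
  refine ⟨Y, ⟨⟨hym.comp continuous_projIcc.measurable, C, fun t ht => hYy ht ▸ hC t ht⟩,
    fun t ht => ?_⟩, hYy⟩
  rw [hYy ht, heq t ht]
  congr 1
  exact setIntegral_congr_fun measurableSet_Icc fun s hs => by
    simp only [hYy (sub_mem_Icc_zero ht.2 hs)]

section solutions

variable {μ : Measure ℝ} {T : ℝ} {g f : ℝ → ℝ → ℝ} {x x' Y Z : ℝ → ℝ}

lemma GoodKernel.bddMeasurable_comp (hg : GoodKernel g) (hY : BddMeasurable T Y) :
    BddMeasurable T fun τ => g (Y τ) τ := by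
  obtain ⟨hYm, C, hC⟩ := hY
  exact ⟨hg.1.comp (hYm.prodMk measurable_id), C, fun τ hτ => (hg.2.1 _ _ hτ.1).trans (hC τ hτ)⟩

variable [IsLocallyFiniteMeasure μ]

lemma IsBorelSolution.abs_le_add_convIcc (hg : GoodKernel g) (hY : IsBorelSolution μ T x g Y) :
    ∀ t ∈ Icc 0 T, |Y t| ≤ |x t| + convIcc μ (fun τ => |Y τ|) t := by
  intro t ht
  calc |Y t| = |x t + convIcc μ (fun τ => g (Y τ) τ) t| := by rw [← hY.2 t ht]
    _ ≤ |x t| + convIcc μ (fun τ => |g (Y τ) τ|) t :=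
        (abs_add_le _ _).trans (add_le_add le_rfl (abs_convIcc_le _ _ _))
    _ ≤ |x t| + convIcc μ (fun τ => |Y τ|) t := add_le_add le_rfl
        (convIcc_mono (hg.bddMeasurable_comp hY.1).abs hY.1.abs (fun τ hτ => hg.2.1 _ _ hτ.1) ht.2)

lemma IsBorelSolution.abs_sub_le_add_convIcc (hg : GoodKernel g) (hf : GoodKernel f)
    (hZ : IsBorelSolution μ T x' g Z) (hY : IsBorelSolution μ T x f Y) :
    ∀ t ∈ Icc 0 T, |Z t - Y t| ≤
      (|x' t - x t| + convIcc μ (fun τ => |g (Y τ) τ - f (Y τ) τ|) t) +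
        convIcc μ (fun τ => |Z τ - Y τ|) t := by
  intro t ht
  have hgZ := hg.bddMeasurable_comp hZ.1
  have hfY := hf.bddMeasurable_comp hY.1
  have hgfY := ((hg.bddMeasurable_comp hY.1).sub hfY).abs
  have hZY := (hZ.1.sub hY.1).abs
  have hpt : ∀ τ ∈ Icc 0 T, |g (Z τ) τ - f (Y τ) τ| ≤ |g (Y τ) τ - f (Y τ) τ| + |Z τ - Y τ| :=
    fun τ hτ => (abs_sub_le _ (g (Y τ) τ) _).trans
      (by linarith [hg.2.2 (Z τ) (Y τ) τ hτ.1])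
  calc |Z t - Y t| = |(x' t - x t) + convIcc μ (fun τ => g (Z τ) τ - f (Y τ) τ) t| := by
        rw [convIcc_sub hgZ hfY ht.2, hZ.2 t ht, hY.2 t ht]; ring_nf
    _ ≤ |x' t - x t| + convIcc μ (fun τ => |g (Z τ) τ - f (Y τ) τ|) t :=
        (abs_add_le _ _).trans (add_le_add le_rfl (abs_convIcc_le _ _ _))
    _ ≤ |x' t - x t| + convIcc μ (fun τ => |g (Y τ) τ - f (Y τ) τ| + |Z τ - Y τ|) t :=
        add_le_add le_rfl (convIcc_mono (hgZ.sub hfY).abs (hgfY.add hZY) hpt ht.2)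
    _ = _ := by rw [convIcc_add hgfY hZY ht.2, add_assoc]

theorem exists_uniform_bound_of_isBorelSolution (hμ : μ {0} < 1) {fn : ℕ → ℝ → ℝ → ℝ}
    {xn Zn : ℕ → ℝ → ℝ} {Cx : ℝ} (hfn : ∀ n, GoodKernel (fn n))
    (hZn : ∀ n, IsBorelSolution μ T (xn n) (fn n) (Zn n))
    (hxn : ∀ n, ∀ t ∈ Icc 0 T, |xn n t| ≤ Cx) :
    ∃ K, ∀ n, ∀ t ∈ Icc 0 T, |Zn n t| ≤ K := by
  obtain ⟨C, hC⟩ := exists_le_mul_of_le_add_convIcc hμ T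
  refine ⟨C * Cx, fun n t ht => ?_⟩
  obtain ⟨hZm, M, hM⟩ := (hZn n).1
  exact hC Cx M (fun τ => |Zn n τ|) ((abs_nonneg _).trans (hxn n t ht)) hZm.abs
    (fun _ _ => abs_nonneg _) hM
    (fun τ hτ => ((hZn n).abs_le_add_convIcc (hfn n) τ hτ).trans
      (add_le_add (hxn n τ hτ) le_rfl)) t ht

lemma tendsto_convIcc_abs_sub_of_tendsto {fn : ℕ → ℝ → ℝ → ℝ} {t : ℝ} (hf : GoodKernel f)
    (hfn : ∀ n, GoodKernel (fn n))
    (hlim : ∀ y τ, 0 ≤ τ → Tendsto (fun n => fn n y τ) atTop (𝓝 (f y τ)))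
    (hY : BddMeasurable T Y) (ht : t ≤ T) :
    Tendsto (fun n => convIcc μ (fun τ => |fn n (Y τ) τ - f (Y τ) τ|) t) atTop (𝓝 0) := by
  obtain ⟨C, hC⟩ := hY.2
  have hbound : ∀ n, ∀ τ ∈ Icc 0 T, |(|fn n (Y τ) τ - f (Y τ) τ|)| ≤ C + C := fun n τ hτ => by
    rw [abs_abs]
    exact (abs_sub _ _).trans (add_le_add ((hfn n).2.1 _ _ hτ.1 |>.trans (hC τ hτ))
      ((hf.2.1 _ _ hτ.1).trans (hC τ hτ)))
  simpa [convIcc] using tendsto_convIcc (g := fun _ => 0)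
    (fun n => (((hfn n).bddMeasurable_comp hY).sub (hf.bddMeasurable_comp hY)).abs.1) hbound
    (fun τ hτ => by simpa using ((hlim (Y τ) τ hτ.1).sub_const (f (Y τ) τ)).abs) ht

end solutions

theorem convolutionEquation_solutions_converge_pointwise_general
    (B : StieltjesFunction ℝ) (hB : IsNNDistFun B) (hB0 : B 0 < 1)
    (T : ℝ) (hT : 0 < T)
    (f : ℝ → ℝ → ℝ) (hf : GoodKernel f)
    (fn : ℕ → ℝ → ℝ → ℝ) (hfn : ∀ n, GoodKernel (fn n))
    (hfpt : ∀ (y t : ℝ), 0 ≤ t → Tendsto (fun n => fn n y t) atTop (nhds (f y t)))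
    (x : ℝ → ℝ) (xn : ℕ → ℝ → ℝ)
    (hxnpt : ∀ t ∈ Set.Icc (0 : ℝ) T, Tendsto (fun n => xn n t) atTop (nhds (x t)))
    (hxnb : ∃ C : ℝ, ∀ (n : ℕ), ∀ t ∈ Set.Icc (0 : ℝ) T, |xn n t| ≤ C)
    (y : ℝ → ℝ) (hy : SolvesConv B T x f y)
    (yn : ℕ → ℝ → ℝ) (hyn : ∀ n, SolvesConv B T (xn n) (fn n) (yn n)) :
    ∀ t ∈ Set.Icc (0 : ℝ) T, Tendsto (fun n => yn n t) atTop (nhds (y t)) := by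
  have hμ := hB.measure_singleton_zero_lt_one hB0
  obtain ⟨Y, hY, hYy⟩ := hy.exists_isBorelSolution hT.le
  choose Yn hYn hYny using fun n => (hyn n).exists_isBorelSolution hT.le
  obtain ⟨Cx, hCx⟩ := hxnb
  obtain ⟨K, hK⟩ := exists_uniform_bound_of_isBorelSolution hμ hfn hYn hCx
  obtain ⟨CY, hCY⟩ := hY.1.2
  have hdiff := tendsto_zero_of_le_add_convIcc hμ (d := fun n τ => |Yn n τ - Y τ|)
    (e := fun n τ =>
      |xn n τ - x τ| + convIcc B.measure (fun σ => |fn n (Y σ) σ - f (Y σ) σ|) τ)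
    (fun n => ((hYn n).1.1.sub hY.1.1).abs) (fun _ _ _ => abs_nonneg _)
    (fun n τ hτ => (abs_sub _ _).trans (add_le_add (hK n τ hτ) (hCY τ hτ)))
    (fun τ hτ => by
      simpa using ((hxnpt τ hτ).sub_const (x τ)).abs.add
        (tendsto_convIcc_abs_sub_of_tendsto hf hfn hfpt hY.1 hτ.2))
    (fun n => (hYn n).abs_sub_le_add_convIcc (hfn n) hf hY)
  intro t ht
  rw [tendsto_iff_norm_sub_tendsto_zero]
  refine (hdiff t ht).congr fun n => ?_
  rw [hYny n ht, hYy ht, Real.norm_eq_abs]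

/-- Pointwise convergence of solutions of convolution equations under monotone
convergence of the kernels (Lemma B.2, part 2). -/
theorem convolutionEquation_solutions_converge_pointwise
    (B : StieltjesFunction ℝ) (hB : IsNNDistFun B) (hB0 : B 0 < 1)
    (T : ℝ) (hT : 0 < T)
    (f : ℝ → ℝ → ℝ) (hf : GoodKernel f)
    (fn : ℕ → ℝ → ℝ → ℝ) (hfn : ∀ n, GoodKernel (fn n))
    (hfpt : ∀ (y t : ℝ), 0 ≤ t → Tendsto (fun n => fn n y t) atTop (nhds (f y t)))
    (hfdec : ∀ (m n : ℕ), n ≤ m → ∀ (y t : ℝ), 0 ≤ t → fn m y t ≤ fn n y t)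
    (hfmono : ∀ (n : ℕ) (y₁ y₂ t : ℝ), 0 ≤ t → y₁ ≤ y₂ → fn n y₁ t ≤ fn n y₂ t)
    (x : ℝ → ℝ) (xn : ℕ → ℝ → ℝ)
    (hxm : Measurable (fun t : Set.Icc (0 : ℝ) T => x t))
    (hxb : ∃ C : ℝ, ∀ t ∈ Set.Icc (0 : ℝ) T, |x t| ≤ C)
    (hxnm : ∀ n, Measurable (fun t : Set.Icc (0 : ℝ) T => xn n t))
    (hxnpt : ∀ t ∈ Set.Icc (0 : ℝ) T, Tendsto (fun n => xn n t) atTop (nhds (x t)))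
    (hxnb : ∃ C : ℝ, ∀ (n : ℕ), ∀ t ∈ Set.Icc (0 : ℝ) T, |xn n t| ≤ C)
    (y : ℝ → ℝ) (hy : SolvesConv B T x f y)
    (yn : ℕ → ℝ → ℝ) (hyn : ∀ n, SolvesConv B T (xn n) (fn n) (yn n)) :
    ∀ t ∈ Set.Icc (0 : ℝ) T, Tendsto (fun n => yn n t) atTop (nhds (y t)) :=
  convolutionEquation_solutions_converge_pointwise_general B hB hB0 T hT f hf fn hfn hfpt x xn hxnpt
    hxnb y hy yn hyn
end
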